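/- Let F = {f_0,…,f_{N−1}} be a finite family of homeomorphisms of the circle 𝕊¹ (with metric d) and μ a probability measure on I = {0,…,N−1} with weights p_0,…,p_{N−1}. Suppose there exist α ∈ (0,1), λ ∈ (0,1), c > 0 such that sup_{x≠y} ∫ d(X_n^x(i), X_n^y(i))^α / d(x,y)^α dμ^ℕ(i) ≤ c·λ^n for all n ∈ ℕ, and there exists L ≥ 1 with L^{−1} d(x,y) ≤ d(f_j(x), f_j(y)) ≤ L d(x,y) for all j ∈ I and x,y ∈ 𝕊¹. Define (Qφ)(j,x) := Σ_{i∈I} p_i φ(i, f_j(x)) and the Hölder seminorm |φ|_α := sup_{j∈I, x≠y} |φ(j,x) − φ(j,y)| / d(x,y)^α. Then there exists C > 0 such that for every bounded measurable φ : I × 𝕊¹ → ℝ and every n ∈ ℕ: |Q^n φ|_α ≤ C·λ^n·|φ|_α. -/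

import Mathlib

/-!
Since `Q^{n+1} φ (j, x) = Σ_i p_i (Q^n φ)(i, f_j x)`, an induction shows that the oscillation of
`Q^{n+1} φ (j, ·)` between `x` and `y` is at most `K` times the average over words of length `n` of
`d(X_n^{f_j x}, X_n^{f_j y})^α`, which is the `μ^ℕ`-expectation of that quantity. The contraction
hypothesis bounds it by `c λ^n d(f_j x, f_j y)^α ≤ c L λ^n d(x, y)^α`.
-/

open MeasureTheory Topology Filter

noncomputable section

/-- Iteration of the IFS: `ifsIter f i n = f (i (n-1)) ∘ ⋯ ∘ f (i 0)`, i.e. `f_i^n`. -/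
def ifsIter {α : Type*} {N : ℕ} (f : Fin N → α → α) (i : ℕ → Fin N) : ℕ → α → α
  | 0, x => x
  | n + 1, x => f (i n) (ifsIter f i n x)

/-- `P` is the Bernoulli product measure `μ^ℕ` on `ℕ → Fin N` with weights `p`. -/
def IsBernoulli {N : ℕ} (p : Fin N → ℝ) (P : Measure (ℕ → Fin N)) : Prop :=
  IsProbabilityMeasure P ∧
    ∀ (n : ℕ) (w : Fin n → Fin N),
      P {i | ∀ k : Fin n, i (k : ℕ) = w k} = ∏ k : Fin n, ENNReal.ofReal (p (w k))

/-- Hypothesis (H): there is no probability measure invariant under every map of the IFS. -/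
def HypH {N : ℕ} (f : Fin N → UnitAddCircle → UnitAddCircle) : Prop :=
  ¬ ∃ m : Measure UnitAddCircle, IsProbabilityMeasure m ∧
      ∀ j : Fin N, Measure.map (f j) m = m

/-- Property (P): proximality. -/
def HypP {N : ℕ} (f : Fin N → UnitAddCircle → UnitAddCircle) : Prop :=
  ∀ x y : UnitAddCircle, ∃ i : ℕ → Fin N, ∃ φ : ℕ → ℕ, StrictMono φ ∧
    Tendsto (fun k => dist (ifsIter f i (φ k) x) (ifsIter f i (φ k) y)) atTop (𝓝 0)

/-- `ν` is a `μ`-stationary measure for the IFS with probabilities: `ν = Σ_j p_j (f_j)_* ν`. -/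
def IFSStationary {N : ℕ} (p : Fin N → ℝ) (f : Fin N → UnitAddCircle → UnitAddCircle)
    (ν : Measure UnitAddCircle) : Prop :=
  ν = ∑ j : Fin N, ENNReal.ofReal (p j) • Measure.map (f j) ν

/-- Hölder continuity of `h`. -/
def IsHolderFn (h : UnitAddCircle → ℝ) : Prop :=
  ∃ H > (0 : ℝ), ∃ β ∈ Set.Ioc (0 : ℝ) 1, ∀ x y, |h x - h y| ≤ H * dist x y ^ β

/-- `g j` is the modulus of the derivative of `f j`, expressed as a metric derivative. -/
def IsAbsDerivOf {N : ℕ} (f : Fin N → UnitAddCircle → UnitAddCircle)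
    (g : Fin N → UnitAddCircle → ℝ) : Prop :=
  ∀ (j : Fin N) (x : UnitAddCircle),
    Tendsto (fun y => dist (f j x) (f j y) / dist x y) (𝓝[≠] x) (𝓝 (g j x))

/-- The Laplace–Markov operator `Q`. -/
def Qop {N : ℕ} (p : Fin N → ℝ) (f : Fin N → UnitAddCircle → UnitAddCircle)
    (φ : Fin N × UnitAddCircle → ℝ) : Fin N × UnitAddCircle → ℝ :=
  fun z => ∑ i : Fin N, p i * φ (i, f z.1 z.2)

open Finset

namespace IFS

variable {X Y : Type*} {N : ℕ}

def wordIter (f : Fin N → X → X) : (n : ℕ) → (Fin n → Fin N) → X → X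
  | 0, _, x => x
  | n + 1, w, x => f (w (Fin.last n)) (wordIter f n (Fin.init w) x)

def markovOp (p : Fin N → ℝ) (f : Fin N → X → X) (h : X → ℝ) (x : X) : ℝ :=
  ∑ i, p i * h (f i x)

lemma ifsIter_eq_wordIter (f : Fin N → X → X) (i : ℕ → Fin N) (n : ℕ) (x : X) :
    ifsIter f i n x = wordIter f n (fun k => i k) x := by
  induction n with
  | zero => rfl
  | succ n ih => rw [ifsIter, ih]; rfl

lemma ifsIter_prodMap (f : Fin N → X → X) (g : Fin N → Y → Y) (i : ℕ → Fin N) (n : ℕ)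
    (z : X × Y) :
    ifsIter (fun j => Prod.map (f j) (g j)) i n z = (ifsIter f i n z.1, ifsIter g i n z.2) := by
  induction n with
  | zero => rfl
  | succ n ih => rw [ifsIter, ih]; rfl

lemma iterate_markovOp_eq_sum (p : Fin N → ℝ) (f : Fin N → X → X) (n : ℕ) (h : X → ℝ) (x : X) :
    (markovOp p f)^[n] h x = ∑ w : Fin n → Fin N, (∏ k, p (w k)) * h (wordIter f n w x) := by
  induction n generalizing h with
  | zero => simp [wordIter]
  | succ n ih =>
    rw [Function.iterate_succ_apply, ih, ← (Fin.snocEquiv _).sum_comp, Fintype.sum_prod_type_right]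
    refine sum_congr rfl fun w _ => ?_
    simp only [markovOp, mul_sum, Fin.snocEquiv, Equiv.coe_fn_mk, Fin.prod_univ_castSucc,
      wordIter, Fin.snoc_castSucc, Fin.snoc_last, Fin.init_snoc]
    exact sum_congr rfl fun a _ => by ring

end IFS

namespace IsBernoulli

variable {X : Type*} {N : ℕ} {p : Fin N → ℝ} {P : Measure (ℕ → Fin N)}

open IFS

lemma integral_comp_restrict (hP : IsBernoulli p P) (hp : ∀ j, 0 ≤ p j) (n : ℕ)
    (G : (Fin n → Fin N) → ℝ) :
    ∫ i, G (fun k => i k) ∂P = ∑ w, (∏ k, p (w k)) * G w := by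
  have : IsProbabilityMeasure P := hP.1
  have hrestrict : Measurable (fun (i : ℕ → Fin N) (k : Fin n) => i k) :=
    measurable_pi_lambda _ fun k => measurable_pi_apply _
  have : IsProbabilityMeasure (P.map fun i (k : Fin n) => i k) :=
    Measure.isProbabilityMeasure_map hrestrict.aemeasurable
  rw [← integral_map hrestrict.aemeasurable (measurable_of_countable G).aestronglyMeasurable,
    integral_fintype .of_finite]
  refine sum_congr rfl fun w _ => ?_
  have hcyl : (fun (i : ℕ → Fin N) (k : Fin n) => i k) ⁻¹' {w} = {i | ∀ k : Fin n, i k = w k} := by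
    ext i
    simp [funext_iff]
  rw [Measure.real, Measure.map_apply hrestrict (measurableSet_singleton w), hcyl, hP.2 n w,
    ENNReal.toReal_prod, smul_eq_mul]
  simp only [ENNReal.toReal_ofReal (hp _)]

lemma integral_ifsIter (hP : IsBernoulli p P) (hp : ∀ j, 0 ≤ p j) (f : Fin N → X → X)
    (h : X → ℝ) (n : ℕ) (x : X) :
    ∫ i, h (ifsIter f i n x) ∂P = (markovOp p f)^[n] h x := by
  simp only [ifsIter_eq_wordIter, hP.integral_comp_restrict hp n (fun w => h (wordIter f n w x)),
    iterate_markovOp_eq_sum]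

end IsBernoulli

namespace Qop

variable {N : ℕ} {p : Fin N → ℝ} {f : Fin N → UnitAddCircle → UnitAddCircle}

open IFS

lemma abs_sub_le_sum (hp : ∀ j, 0 ≤ p j) (ψ : Fin N × UnitAddCircle → ℝ) (j : Fin N)
    (x y : UnitAddCircle) :
    |Qop p f ψ (j, x) - Qop p f ψ (j, y)| ≤ ∑ i, p i * |ψ (i, f j x) - ψ (i, f j y)| := by
  simp only [Qop, ← sum_sub_distrib, ← mul_sub]
  refine (abs_sum_le_sum_abs _ _).trans_eq (sum_congr rfl fun i _ => ?_)
  rw [abs_mul, abs_of_nonneg (hp i)]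

lemma abs_sub_le_markovOp (hp : ∀ j, 0 ≤ p j) {ψ : Fin N × UnitAddCircle → ℝ}
    {G : UnitAddCircle × UnitAddCircle → ℝ}
    (hψ : ∀ j x y, |ψ (j, x) - ψ (j, y)| ≤ G (f j x, f j y)) (j : Fin N) (x y : UnitAddCircle) :
    |Qop p f ψ (j, x) - Qop p f ψ (j, y)| ≤
      markovOp p (fun i => Prod.map (f i) (f i)) G (f j x, f j y) :=
  (abs_sub_le_sum hp ψ j x y).trans <| sum_le_sum fun i _ =>
    mul_le_mul_of_nonneg_left (hψ i _ _) (hp i)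

lemma abs_sub_le (hp : ∀ j, 0 ≤ p j) (hpsum : ∑ j, p j = 1) {ψ : Fin N × UnitAddCircle → ℝ}
    {G : UnitAddCircle × UnitAddCircle → ℝ}
    (hψ : ∀ j x y, |ψ (j, x) - ψ (j, y)| ≤ G (x, y)) (j : Fin N) (x y : UnitAddCircle) :
    |Qop p f ψ (j, x) - Qop p f ψ (j, y)| ≤ G (f j x, f j y) := by
  refine (abs_sub_le_sum hp ψ j x y).trans ?_
  calc ∑ i, p i * |ψ (i, f j x) - ψ (i, f j y)| ≤ ∑ i, p i * G (f j x, f j y) :=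
        sum_le_sum fun i _ => mul_le_mul_of_nonneg_left (hψ i _ _) (hp i)
    _ = G (f j x, f j y) := by rw [← sum_mul, hpsum, one_mul]

lemma abs_iterate_succ_sub_le (hp : ∀ j, 0 ≤ p j) (hpsum : ∑ j, p j = 1)
    {φ : Fin N × UnitAddCircle → ℝ} {G : UnitAddCircle × UnitAddCircle → ℝ}
    (hφ : ∀ j x y, |φ (j, x) - φ (j, y)| ≤ G (x, y)) (n : ℕ) (j : Fin N) (x y : UnitAddCircle) :
    |(Qop p f)^[n + 1] φ (j, x) - (Qop p f)^[n + 1] φ (j, y)| ≤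
      (markovOp p (fun i => Prod.map (f i) (f i)))^[n] G (f j x, f j y) := by
  induction n generalizing j x y with
  | zero => exact abs_sub_le hp hpsum hφ j x y
  | succ n ih =>
    rw [Function.iterate_succ_apply' (Qop p f) (n + 1),
      Function.iterate_succ_apply' (markovOp _ _) n]
    exact abs_sub_le_markovOp hp ih j x y

lemma abs_iterate_succ_sub_le_integral (hp : ∀ j, 0 ≤ p j) (hpsum : ∑ j, p j = 1)
    {P : Measure (ℕ → Fin N)} (hP : IsBernoulli p P) {φ : Fin N × UnitAddCircle → ℝ} {K α : ℝ}
    (hφ : ∀ j x y, |φ (j, x) - φ (j, y)| ≤ K * dist x y ^ α) (n : ℕ) (j : Fin N)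
    (x y : UnitAddCircle) :
    |(Qop p f)^[n + 1] φ (j, x) - (Qop p f)^[n + 1] φ (j, y)| ≤
      K * ∫ i, dist (ifsIter f i n (f j x)) (ifsIter f i n (f j y)) ^ α ∂P :=
  calc _ ≤ _ := abs_iterate_succ_sub_le (G := fun z => K * dist z.1 z.2 ^ α) hp hpsum hφ n j x y
    _ = _ := by rw [← hP.integral_ifsIter hp, ← integral_const_mul]; simp only [ifsIter_prodMap]

end Qop

lemma Real.rpow_le_mul_rpow_of_le_mul {a b L α : ℝ} (ha : 0 ≤ a) (hab : a ≤ L * b) (hL : 1 ≤ L)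
    (hα : α ∈ Set.Icc (0 : ℝ) 1) : a ^ α ≤ L * b ^ α := by
  have hb : 0 ≤ b := nonneg_of_mul_nonneg_right (ha.trans hab) (by linarith)
  calc a ^ α ≤ (L * b) ^ α := Real.rpow_le_rpow ha hab hα.1
    _ = L ^ α * b ^ α := Real.mul_rpow (by linarith) hb
    _ ≤ L * b ^ α := by
      gcongr
      exact Real.rpow_le_self_of_one_le hL hα.2

theorem stmt17 {N : ℕ} (f : Fin N → (UnitAddCircle ≃ₜ UnitAddCircle))
    (p : Fin N → ℝ) (hp : ∀ j, 0 ≤ p j) (hpsum : ∑ j, p j = 1)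
    (P : Measure (ℕ → Fin N)) (hP : IsBernoulli p P)
    (α : ℝ) (hα : α ∈ Set.Ioo (0 : ℝ) 1) (lam : ℝ) (hlam : lam ∈ Set.Ioo (0 : ℝ) 1)
    (c : ℝ) (hc : 0 < c)
    (hdecay : ∀ (n : ℕ) (x y : UnitAddCircle), x ≠ y →
      (∫ i, (dist (ifsIter (fun j => ⇑(f j)) i n x) (ifsIter (fun j => ⇑(f j)) i n y)) ^ α /
          (dist x y) ^ α ∂P) ≤ c * lam ^ n)
    (L : ℝ) (hL : 1 ≤ L)
    (hLip : ∀ (j : Fin N) (x y : UnitAddCircle),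
      L⁻¹ * dist x y ≤ dist (f j x) (f j y) ∧ dist (f j x) (f j y) ≤ L * dist x y) :
    ∃ C > (0 : ℝ), ∀ φ : Fin N × UnitAddCircle → ℝ, Measurable φ →
      (∃ Cb : ℝ, ∀ z, |φ z| ≤ Cb) →
      ∀ K : ℝ, (∀ (j : Fin N) (x y : UnitAddCircle),
          |φ (j, x) - φ (j, y)| ≤ K * dist x y ^ α) →
        ∀ (n : ℕ) (j : Fin N) (x y : UnitAddCircle),
          |(Qop p (fun j => ⇑(f j)))^[n] φ (j, x) - (Qop p (fun j => ⇑(f j)))^[n] φ (j, y)|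
            ≤ C * lam ^ n * K * dist x y ^ α := by
  obtain ⟨hlam0, -⟩ := hlam
  set C := max 1 (c * L / lam)
  have hcL : c * L ≤ C * lam := (div_le_iff₀ hlam0).1 (le_max_right _ _)
  refine ⟨C, one_pos.trans_le (le_max_left _ _), fun φ _ _ K hφ n j x y => ?_⟩
  rcases eq_or_ne x y with rfl | hxy
  · simp [Real.zero_rpow hα.1.ne']
  have hd : 0 < dist x y ^ α := Real.rpow_pos_of_pos (dist_pos.2 hxy) α
  have hK : 0 ≤ K := nonneg_of_mul_nonneg_left ((abs_nonneg _).trans (hφ j x y)) hd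
  cases n with
  | zero =>
    have hC : 1 ≤ C := le_max_left _ _
    simpa [mul_assoc] using (hφ j x y).trans (le_mul_of_one_le_left (by positivity) hC)
  | succ m =>
    have hfxy : dist (f j x) (f j y) ^ α ≤ L * dist x y ^ α :=
      Real.rpow_le_mul_rpow_of_le_mul dist_nonneg (hLip j x y).2 hL (Set.Ioo_subset_Icc_self hα)
    have hfj : f j x ≠ f j y := (f j).injective.ne hxy
    have hmean := hdecay m _ _ hfj
    rw [integral_div, div_le_iff₀ (Real.rpow_pos_of_pos (dist_pos.2 hfj) α)] at hmean
    calc _ ≤ K * ∫ i, dist (ifsIter (fun j => ⇑(f j)) i m (f j x))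
            (ifsIter (fun j => ⇑(f j)) i m (f j y)) ^ α ∂P :=
          Qop.abs_iterate_succ_sub_le_integral hp hpsum hP hφ m j x y
      _ ≤ K * (c * lam ^ m * dist (f j x) (f j y) ^ α) := by gcongr
      _ ≤ K * (c * lam ^ m * (L * dist x y ^ α)) := by gcongr
      _ = c * L * (lam ^ m * K * dist x y ^ α) := by ring
      _ ≤ C * lam * (lam ^ m * K * dist x y ^ α) := by gcongr
      _ = C * lam ^ (m + 1) * K * dist x y ^ α := by ring
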